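/- For any positive integer n, the n-dimensional hypercube Q_n has edge metric dimension at most n; specifically, the set B_n consisting of the all-ones vector together with the n−1 vectors obtained from it by flipping one of the first n−1 coordinates is an edge metric generator. -/

import Mathlib

open SimpleGraph

/-- Distance from a vertex `v` to an edge `e = uw`: `min (d v u) (d v w)`. -/
noncomputable def edgeDist {V : Type*} (G : SimpleGraph V) (v : V) (e : Sym2 V) : ℕ :=
  Sym2.lift ⟨fun u w => min (G.dist v u) (G.dist v w), fun u w => by simp [min_comm]⟩ e

/-- `S` is an edge metric generator: every two distinct edges are distinguished
by some vertex of `S`. -/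
def IsEdgeMetricGenerator {V : Type*} (G : SimpleGraph V) (S : Set V) : Prop :=
  ∀ e₁ ∈ G.edgeSet, ∀ e₂ ∈ G.edgeSet, e₁ ≠ e₂ →
    ∃ v ∈ S, edgeDist G v e₁ ≠ edgeDist G v e₂

/-- The edge metric dimension: minimum cardinality of an edge metric generator. -/
noncomputable def edim {V : Type*} (G : SimpleGraph V) : ℕ :=
  sInf {k | ∃ S : Finset V, S.card = k ∧ IsEdgeMetricGenerator G ↑S}

/-- The `n`-dimensional hypercube: binary vectors adjacent iff they differ in
exactly one coordinate. -/
def hypercube (n : ℕ) : SimpleGraph (Fin n → Bool) where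
  Adj x y := hammingDist x y = 1
  symm := ⟨fun x y h => by simpa [hammingDist_comm] using h⟩
  loopless := ⟨fun x h => by simp at h⟩

/-- The set consisting of the all-ones vector together with the vectors obtained
from it by flipping one of the first `n - 1` coordinates. -/
def Bset (n : ℕ) : Set (Fin n → Bool) :=
  insert (fun _ => true)
    {w | ∃ i : Fin n, (i : ℕ) < n - 1 ∧ w = Function.update (fun _ => true) i false}

open Finset Function

/-!
The edge of `Q_n` through `x` in direction `i` lies at distance `#{j ≠ i | v j ≠ x j}` from `v`.
So flipping coordinate `k` of the all-ones vertex changes its distance to that edge by `0` if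
`k = i`, and otherwise by `+1` or `-1` according to `x k`. Comparing each vertex of `B_n` with
the all-ones vertex thus recovers the direction `i` (it is the last coordinate if no such `k`
gives `0`) and every coordinate of `x` off `i` except the last one, which is then determined by
the distance from the all-ones vertex itself.
-/

theorem hammingDist_update_update {ι β : Type*} [Fintype ι] [DecidableEq ι] [DecidableEq β]
    (x y : ι → β) (i : ι) (a b : β) :
    hammingDist (update x i a) (update y i b) =
      #{j | j ≠ i ∧ x j ≠ y j} + if a = b then 0 else 1 := by
  unfold hammingDist
  split_ifs with hab
  · congr 1
    ext j
    by_cases hj : j = i <;> simp [update_apply, hj, hab]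
  · rw [← card_insert_of_notMem (s := {j | j ≠ i ∧ x j ≠ y j}) (a := i) (by simp)]
    congr 1
    ext j
    by_cases hj : j = i <;> simp [update_apply, hj, hab]

theorem edgeDist_mk {V : Type*} (G : SimpleGraph V) (v u w : V) :
    edgeDist G v s(u, w) = min (G.dist v u) (G.dist v w) := rfl

theorem IsEdgeMetricGenerator.mono {V : Type*} {G : SimpleGraph V} {S T : Set V}
    (hS : IsEdgeMetricGenerator G S) (hST : S ⊆ T) : IsEdgeMetricGenerator G T :=
  fun e₁ he₁ e₂ he₂ hne =>
    let ⟨v, hv, hd⟩ := hS e₁ he₁ e₂ he₂ hne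
    ⟨v, hST hv, hd⟩

theorem edim_le_card {V : Type*} {G : SimpleGraph V} {S : Finset V}
    (hS : IsEdgeMetricGenerator G S) : edim G ≤ #S :=
  Nat.sInf_le ⟨S, rfl, hS⟩

section Hypercube

variable {n : ℕ}

theorem hypercube_adj_update {x : Fin n → Bool} {i : Fin n} {a : Bool} (ha : a ≠ x i) :
    (hypercube n).Adj x (update x i a) := by
  have h := hammingDist_update_update x x i (x i) a
  rw [update_eq_self] at h
  show hammingDist x (update x i a) = 1
  simpa [ha.symm] using h

theorem exists_walk_length_eq_hammingDist (x y : Fin n → Bool) :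
    ∃ p : (hypercube n).Walk x y, p.length = hammingDist x y := by
  induction h : hammingDist x y generalizing x with
  | zero => exact eq_of_hammingDist_eq_zero h ▸ ⟨.nil, rfl⟩
  | succ m ih =>
    obtain ⟨i, hi⟩ := Function.ne_iff.mp (hammingDist_pos.mp (by omega : 0 < hammingDist x y))
    have hstep := hammingDist_update_update x y i (y i) (y i)
    have hxy := hammingDist_update_update x y i (x i) (y i)
    rw [update_eq_self, update_eq_self, h, if_neg hi] at hxy
    rw [update_eq_self, if_pos rfl] at hstep
    obtain ⟨p, hp⟩ := ih (update x i (y i)) (by omega)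
    exact ⟨.cons (hypercube_adj_update hi.symm) p, by simp [hp]⟩

theorem hammingDist_le_length {x y : Fin n → Bool} (p : (hypercube n).Walk x y) :
    hammingDist x y ≤ p.length := by
  induction p with
  | nil => simp
  | @cons a b c h p ih =>
    calc hammingDist a c ≤ hammingDist a b + hammingDist b c := hammingDist_triangle _ _ _
      _ ≤ 1 + p.length := by rw [show hammingDist a b = 1 from h]; omega
      _ = (p.cons h).length := by rw [Walk.length_cons, add_comm]

theorem hypercube_dist (x y : Fin n → Bool) : (hypercube n).dist x y = hammingDist x y := by
  obtain ⟨p, hp⟩ := exists_walk_length_eq_hammingDist x y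
  refine le_antisymm (hp ▸ dist_le p) ?_
  obtain ⟨q, hq⟩ := p.reachable.exists_walk_length_eq_dist
  exact hq ▸ hammingDist_le_length q

def cubeEdge (x : Fin n → Bool) (i : Fin n) : Sym2 (Fin n → Bool) :=
  s(x, update x i (!x i))

theorem cubeEdge_update (x : Fin n → Bool) (i : Fin n) (b : Bool) :
    cubeEdge (update x i b) i = cubeEdge x i := by
  cases b <;> cases h : x i <;> simp [cubeEdge, h, Sym2.eq_swap]

theorem cubeEdge_eq_of_forall_ne {x y : Fin n → Bool} {i : Fin n} (h : ∀ k ≠ i, x k = y k) :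
    cubeEdge x i = cubeEdge y i := by
  calc cubeEdge x i = cubeEdge (update x i (y i)) i := (cubeEdge_update x i (y i)).symm
    _ = cubeEdge y i := by rw [← eq_update_iff.2 ⟨rfl, fun k hk => (h k hk).symm⟩]

theorem exists_cubeEdge_eq {e : Sym2 (Fin n → Bool)} (he : e ∈ (hypercube n).edgeSet) :
    ∃ x i, e = cubeEdge x i := by
  induction e using Sym2.ind with
  | _ x y =>
    have hxy : (hypercube n).Adj x y := he
    obtain ⟨i, hi⟩ := Function.ne_iff.mp hxy.ne
    have h := hammingDist_update_update x y i (x i) (y i)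
    rw [update_eq_self, update_eq_self, if_neg hi, show hammingDist x y = 1 from hxy] at h
    have hoff : #{j | j ≠ i ∧ x j ≠ y j} = 0 := by omega
    rw [card_eq_zero, filter_eq_empty_iff] at hoff
    refine ⟨x, i, congrArg _ (eq_update_iff.2 ⟨?_, fun k hk => ?_⟩)⟩
    · revert hi; cases x i <;> cases y i <;> simp
    · simpa [hk, eq_comm] using hoff (mem_univ k)

-- `update x i (v i)` is the endpoint of the edge nearer to `v`.
theorem edgeDist_cubeEdge (v x : Fin n → Bool) (i : Fin n) :
    edgeDist (hypercube n) v (cubeEdge x i) = hammingDist v (update x i (v i)) := by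
  rw [cubeEdge, edgeDist_mk, hypercube_dist, hypercube_dist]
  have h := fun a => hammingDist_update_update v x i (v i) a
  have hx := h (x i)
  simp only [update_eq_self] at h hx
  rw [hx, h, h]
  cases v i <;> cases x i <;> simp

theorem edgeDist_update_self (v x : Fin n → Bool) (i : Fin n) (b : Bool) :
    edgeDist (hypercube n) (update v i b) (cubeEdge x i) =
      edgeDist (hypercube n) v (cubeEdge x i) := by
  have h := hammingDist_update_update v x i (v i) (v i)
  rw [update_eq_self] at h
  rw [edgeDist_cubeEdge, edgeDist_cubeEdge, update_self, h, hammingDist_update_update]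
  simp

theorem edgeDist_update_of_ne (v x : Fin n → Bool) {i k : Fin n} (hki : k ≠ i) (b : Bool) :
    edgeDist (hypercube n) (update v k b) (cubeEdge x i) =
      #{j | j ≠ k ∧ v j ≠ update x i (v i) j} + if b = x k then 0 else 1 := by
  rw [edgeDist_cubeEdge, update_of_ne hki.symm]
  conv_lhs => rw [← update_eq_self k (update x i (v i))]
  rw [hammingDist_update_update, update_of_ne hki]

theorem edgeDist_update_false_sub (x : Fin n → Bool) (i k : Fin n) :
    (edgeDist (hypercube n) (update (fun _ => true) k false) (cubeEdge x i) : ℤ) -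
        edgeDist (hypercube n) (fun _ => true) (cubeEdge x i) =
      if k = i then 0 else if x k then 1 else -1 := by
  split_ifs with hki hxk
  · rw [hki, edgeDist_update_self, sub_self]
  all_goals
    have h := edgeDist_update_of_ne (fun _ => true) x hki
    have htrue := h true
    rw [update_eq_self_iff.2 rfl] at htrue
    rw [h, htrue]
    simp [hxk]

theorem eq_of_edgeDist_cubeEdge_eq {v x y : Fin n → Bool} {i k : Fin n} (hki : k ≠ i)
    (hxy : ∀ l ≠ k, l ≠ i → x l = y l)
    (h : edgeDist (hypercube n) v (cubeEdge x i) = edgeDist (hypercube n) v (cubeEdge y i)) :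
    x k = y k := by
  rw [← update_eq_self k v, edgeDist_update_of_ne _ _ hki, edgeDist_update_of_ne _ _ hki] at h
  have hoff : #{j | j ≠ k ∧ v j ≠ update x i (v i) j} =
      #{j | j ≠ k ∧ v j ≠ update y i (v i) j} := by
    congr 1
    ext l
    by_cases hli : l = i
    · simp [hli]
    · simp +contextual [hxy l, hli]
  rw [hoff] at h
  revert h
  cases v k <;> cases x k <;> cases y k <;> simp

end Hypercube

theorem cubeEdge_eq_of_edgeDist_Bset_eq {m : ℕ} {x y : Fin (m + 1) → Bool} {i j : Fin (m + 1)}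
    (h : ∀ v ∈ Bset (m + 1), edgeDist (hypercube (m + 1)) v (cubeEdge x i) =
      edgeDist (hypercube (m + 1)) v (cubeEdge y j)) :
    cubeEdge x i = cubeEdge y j := by
  have hone := h _ (Set.mem_insert _ _)
  have hsig : ∀ k ≠ Fin.last m, (k = i ↔ k = j) ∧ (k ≠ i → x k = y k) := by
    intro k hk
    have hflip := h _ (Set.mem_insert_of_mem _ ⟨k, by simpa using Fin.val_lt_last hk, rfl⟩)
    have hsub := edgeDist_update_false_sub x i k
    rw [hflip, hone, edgeDist_update_false_sub] at hsub
    revert hsub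
    by_cases hi : k = i <;> by_cases hj : k = j <;> cases x k <;> cases y k <;> simp [hi, hj]
  obtain rfl : i = j := by
    by_cases hi : i = Fin.last m
    · by_cases hj : j = Fin.last m
      · exact hi.trans hj.symm
      · exact ((hsig j hj).1.mpr rfl).symm
    · exact (hsig i hi).1.mp rfl
  refine cubeEdge_eq_of_forall_ne fun k hki => ?_
  by_cases hk : k = Fin.last m
  · exact eq_of_edgeDist_cubeEdge_eq hki (fun l hlk hli => (hsig l (hk ▸ hlk)).2 hli) hone
  · exact (hsig k hk).2 hki

theorem isEdgeMetricGenerator_Bset (m : ℕ) :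
    IsEdgeMetricGenerator (hypercube (m + 1)) (Bset (m + 1)) := by
  intro e₁ he₁ e₂ he₂ hne
  obtain ⟨x, i, rfl⟩ := exists_cubeEdge_eq he₁
  obtain ⟨y, j, rfl⟩ := exists_cubeEdge_eq he₂
  by_contra! h
  exact hne (cubeEdge_eq_of_edgeDist_Bset_eq h)

theorem Bset_subset_image (m : ℕ) :
    Bset (m + 1) ⊆ ↑(univ.image fun k : Fin (m + 1) =>
      if k = Fin.last m then fun _ => true else update (fun _ => true) k false) := by
  rintro w (rfl | ⟨k, hk, rfl⟩)
  · exact mem_image.2 ⟨Fin.last m, mem_univ _, if_pos rfl⟩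
  · exact mem_image.2 ⟨k, mem_univ _, if_neg (by rintro rfl; simp at hk)⟩

theorem edim_hypercube_le (n : ℕ) (hn : 1 ≤ n) :
    IsEdgeMetricGenerator (hypercube n) (Bset n) ∧ edim (hypercube n) ≤ n := by
  obtain ⟨m, rfl⟩ := Nat.exists_eq_add_of_le' hn
  have hB := isEdgeMetricGenerator_Bset m
  refine ⟨hB, ?_⟩
  calc edim (hypercube (m + 1)) ≤ _ := edim_le_card (hB.mono (Bset_subset_image m))
    _ ≤ #(univ : Finset (Fin (m + 1))) := card_image_le
    _ = m + 1 := card_fin _
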